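/- If G(y) = (1-μy)^{2/3} with 0 < μ < μ* and y_c is the first positive root of G - yG' - y = 0, then 1 - μ y_c > 0; i.e., the Cauchy horizon lies strictly before the shell-focusing singularity y = 1/μ. -/

import Mathlib

/-!
Write `u = 1 - μy`. For `u > 0`, multiplying `G - yG' - y` by `u^{1/3}` gives
`1 - μy/3 - y u^{1/3} = (2 + u)/3 - (1 - u) u^{1/3}/μ`, which is negative exactly when
`μ < 3(1 - u) u^{1/3}/(2 + u)`. The right-hand side is maximal on `0 < u < 1` at
`u = 3√3 - 5`, where it equals `μ*`. So for `μ < μ*` the function is negative at the point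
`y₀` with `1 - μy₀ = 3√3 - 5`, while it equals `1` at `y = 0`; by the intermediate value
theorem it vanishes in `(0, y₀]`, hence `y_c ≤ y₀` and `1 - μ y_c ≥ 3√3 - 5 > 0`.
-/

open Real Set

noncomputable def horizonFn (G : ℝ → ℝ) (y : ℝ) : ℝ := G y - y * deriv G y - y

theorem le_of_forall_ne_zero_of_pos_of_nonpos {F : ℝ → ℝ} {b c : ℝ} (hb : 0 ≤ b)
    (hF : ContinuousOn F (Icc 0 b)) (hF0 : 0 < F 0) (hFb : F b ≤ 0)
    (hc : ∀ z, 0 < z → z < c → F z ≠ 0) : c ≤ b := by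
  obtain ⟨z, ⟨hz0, hzb⟩, hFz⟩ := intermediate_value_Icc' hb hF ⟨hFb, hF0.le⟩
  have hz : 0 < z := hz0.lt_of_ne (by rintro rfl; exact hF0.ne' hFz)
  by_contra! hbc
  exact hc z hz (hzb.trans_lt hbc) hFz

section Profile

variable {μ y : ℝ}

theorem hasDerivAt_one_sub_mul_rpow (p : ℝ) (hy : 1 - μ * y ≠ 0) :
    HasDerivAt (fun y => (1 - μ * y) ^ p) (-μ * p * (1 - μ * y) ^ (p - 1)) y := by
  simpa using (((hasDerivAt_id y).const_mul μ).const_sub 1).rpow_const (p := p) (Or.inl hy)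

theorem horizonFn_one_sub_mul_rpow_two_thirds (hy : 0 < 1 - μ * y) :
    horizonFn (fun y => (1 - μ * y) ^ (2 / 3 : ℝ)) y =
      (1 - μ * y) ^ (2 / 3 : ℝ) + 2 / 3 * μ * y * (1 - μ * y) ^ (-1 / 3 : ℝ) - y := by
  rw [horizonFn, (hasDerivAt_one_sub_mul_rpow _ hy.ne').deriv]
  norm_num
  ring

theorem continuousOn_horizonFn_one_sub_mul_rpow_two_thirds :
    ContinuousOn (horizonFn fun y => (1 - μ * y) ^ (2 / 3 : ℝ)) {y | 0 < 1 - μ * y} := by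
  have h : ContinuousOn (fun y => (1 - μ * y) ^ (2 / 3 : ℝ) +
      2 / 3 * μ * y * (1 - μ * y) ^ (-1 / 3 : ℝ) - y) {y | 0 < 1 - μ * y} := by
    intro y hy
    fun_prop (disch := exact Or.inl (ne_of_gt hy))
  exact h.congr fun y hy => horizonFn_one_sub_mul_rpow_two_thirds hy

theorem horizonFn_one_sub_mul_rpow_two_thirds_mul_rpow_one_third (hy : 0 < 1 - μ * y) :
    horizonFn (fun y => (1 - μ * y) ^ (2 / 3 : ℝ)) y * (1 - μ * y) ^ (1 / 3 : ℝ) =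
      1 - μ * y / 3 - y * (1 - μ * y) ^ (1 / 3 : ℝ) := by
  have h₁ : (1 - μ * y) ^ (2 / 3 : ℝ) * (1 - μ * y) ^ (1 / 3 : ℝ) = 1 - μ * y := by
    rw [← rpow_add hy]; norm_num
  have h₂ : (1 - μ * y) ^ (-1 / 3 : ℝ) * (1 - μ * y) ^ (1 / 3 : ℝ) = 1 := by
    rw [← rpow_add hy]; norm_num
  rw [horizonFn_one_sub_mul_rpow_two_thirds hy]
  linear_combination h₁ + 2 / 3 * μ * y * h₂

theorem horizonFn_one_sub_mul_rpow_two_thirds_neg (hy : 0 < 1 - μ * y)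
    (h : 1 - μ * y / 3 < y * (1 - μ * y) ^ (1 / 3 : ℝ)) :
    horizonFn (fun y => (1 - μ * y) ^ (2 / 3 : ℝ)) y < 0 := by
  refine neg_of_mul_neg_left ?_ (rpow_nonneg hy.le (1 / 3))
  rw [horizonFn_one_sub_mul_rpow_two_thirds_mul_rpow_one_third hy]
  linarith

end Profile

theorem rpow_one_third_104_sub_60_sqrt_three :
    (104 - 60 * √3) ^ (1 / 3 : ℝ) = (√3 - 1) * (3 * √3 - 5) ^ (1 / 3 : ℝ) := by
  have hs : √3 ^ 2 = 3 := sq_sqrt (by norm_num)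
  have hs1 : 1 < √3 := by nlinarith [sqrt_nonneg 3]
  have hc : 0 ≤ 3 * √3 - 5 := by nlinarith [sqrt_nonneg 3]
  have hcube : 104 - 60 * √3 = (√3 - 1) ^ 3 * (3 * √3 - 5) := by
    linear_combination (-3 * √3 ^ 2 + 14 * √3 - 33) * hs
  rw [hcube, mul_rpow (by positivity) hc, ← rpow_natCast, ← rpow_mul (by linarith)]
  norm_num

theorem mul_sqrt_three_sub_one_lt {μ : ℝ} (hμ : μ < 3 / 2 * (104 - 60 * √3) ^ (1 / 3 : ℝ)) :
    μ * (√3 - 1) < (6 - 3 * √3) * (3 * √3 - 5) ^ (1 / 3 : ℝ) := by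
  have hs : √3 ^ 2 = 3 := sq_sqrt (by norm_num)
  have hs1 : 1 < √3 := by nlinarith [sqrt_nonneg 3]
  rw [rpow_one_third_104_sub_60_sqrt_three] at hμ
  calc μ * (√3 - 1) < 3 / 2 * ((√3 - 1) * (3 * √3 - 5) ^ (1 / 3 : ℝ)) * (√3 - 1) :=
        mul_lt_mul_of_pos_right hμ (by linarith)
    _ = (6 - 3 * √3) * (3 * √3 - 5) ^ (1 / 3 : ℝ) := by
        linear_combination (3 / 2 * (3 * √3 - 5) ^ (1 / 3 : ℝ)) * hs

theorem stmt_18_general (μ : ℝ) (hμ0 : 0 < μ)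
    (hμs : μ < (3 / 2) * (104 - 60 * Real.sqrt 3) ^ ((1 : ℝ) / 3))
    (G : ℝ → ℝ) (hG : ∀ y, G y = (1 - μ * y) ^ ((2 : ℝ) / 3))
    (yc : ℝ)
    (hfirst : ∀ z : ℝ, 0 < z → z < yc → G z - z * deriv G z - z ≠ 0) :
    1 - μ * yc > 0 := by
  obtain rfl : G = fun y => (1 - μ * y) ^ ((2 : ℝ) / 3) := funext hG
  have hs : √3 ^ 2 = 3 := sq_sqrt (by norm_num)
  have hs1 : 1 < √3 := by nlinarith [sqrt_nonneg 3]
  have hc : 0 < 3 * √3 - 5 := by nlinarith [sqrt_nonneg 3]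
  set y₀ := (6 - 3 * √3) / μ
  have hμy₀ : μ * y₀ = 6 - 3 * √3 := mul_div_cancel₀ _ hμ0.ne'
  have hu₀ : 1 - μ * y₀ = 3 * √3 - 5 := by rw [hμy₀]; ring
  have hy₀ : 0 ≤ y₀ := div_nonneg (by nlinarith) hμ0.le
  have hneg : horizonFn (fun y => (1 - μ * y) ^ ((2 : ℝ) / 3)) y₀ < 0 := by
    refine horizonFn_one_sub_mul_rpow_two_thirds_neg (hu₀ ▸ hc) ?_
    rw [hu₀, hμy₀, div_mul_eq_mul_div, lt_div_iff₀ hμ0]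
    linarith [mul_sqrt_three_sub_one_lt hμs]
  have hyc : yc ≤ y₀ := by
    refine le_of_forall_ne_zero_of_pos_of_nonpos hy₀
      (continuousOn_horizonFn_one_sub_mul_rpow_two_thirds.mono fun y hy => ?_)
      (by simp [horizonFn]) hneg.le hfirst
    have := mul_le_mul_of_nonneg_left hy.2 hμ0.le
    show 0 < 1 - μ * y
    linarith
  have := mul_le_mul_of_nonneg_left hyc hμ0.le
  linarith

/-- If `G(y) = (1-μy)^{2/3}` with `0 < μ < μ*` and `y_c` is the first positive
root of `G - yG' - y = 0`, then `1 - μ y_c > 0`: the Cauchy horizon lies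
strictly before the shell-focusing singularity `y = 1/μ`. -/
theorem stmt_18 (μ : ℝ) (hμ0 : 0 < μ)
    (hμs : μ < (3 / 2) * (104 - 60 * Real.sqrt 3) ^ ((1 : ℝ) / 3))
    (G : ℝ → ℝ) (hG : ∀ y, G y = (1 - μ * y) ^ ((2 : ℝ) / 3))
    (yc : ℝ) (hpos : 0 < yc)
    (hroot : G yc - yc * deriv G yc - yc = 0)
    (hfirst : ∀ z : ℝ, 0 < z → z < yc → G z - z * deriv G z - z ≠ 0) :
    1 - μ * yc > 0 :=
  stmt_18_general μ hμ0 hμs G hG yc hfirst
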